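/- For every finite simple graph G with at least one vertex, z(G) ≤ max_{u ∈ V(G)} z(G⁺(u)), where G⁺(u) is the subgraph of G induced by the ball B(u, deg(u)+1) of radius deg(u)+1 centered at u. Moreover, if G is z-monotonic then z(G) = max_{u ∈ V(G)} z(G⁺(u)). -/

import Mathlib

variable {V : Type*} {W : Type*}

/-- A proper coloring of `G` using colors `{1, …, k}`: colors lie in `{1,…,k}`,
adjacent vertices get different colors, and every color in `{1,…,k}` is used. -/
def IsProperKColoring (G : SimpleGraph V) (k : ℕ) (c : V → ℕ) : Prop :=
  (∀ v, c v ∈ Set.Icc 1 k) ∧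
  (∀ u v, G.Adj u v → c u ≠ c v) ∧
  (∀ j ∈ Set.Icc 1 k, ∃ v, c v = j)

/-- `u` is a b-vertex: every color `j ∈ {1,…,k}` with `j ≠ c u` appears on a neighbor of `u`. -/
def IsBVertex (G : SimpleGraph V) (k : ℕ) (c : V → ℕ) (u : V) : Prop :=
  ∀ j ∈ Set.Icc 1 k, j ≠ c u → ∃ w, G.Adj u w ∧ c w = j

/-- `u` is a nice vertex: it is a b-vertex and for every color `j ≠ c u` in `{1,…,k}`
it has a b-vertex neighbor of color `j`. -/
def IsNiceVertex (G : SimpleGraph V) (k : ℕ) (c : V → ℕ) (u : V) : Prop :=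
  IsBVertex G k c u ∧
  ∀ j ∈ Set.Icc 1 k, j ≠ c u → ∃ w, G.Adj u w ∧ c w = j ∧ IsBVertex G k c w

/-- A Grundy coloring using `k` colors: proper, and every vertex of color `j` has a
neighbor of each smaller color `i ≥ 1`. -/
def IsGrundyColoring (G : SimpleGraph V) (k : ℕ) (c : V → ℕ) : Prop :=
  IsProperKColoring G k c ∧
  ∀ i j : ℕ, 1 ≤ i → i < j → j ≤ k → ∀ v, c v = j → ∃ w, G.Adj v w ∧ c w = i

/-- A z-coloring: a Grundy coloring with a nice vertex of (top) color `k`. -/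
def IsZColoring (G : SimpleGraph V) (k : ℕ) (c : V → ℕ) : Prop :=
  IsGrundyColoring G k c ∧ ∃ u, c u = k ∧ IsNiceVertex G k c u

/-- A b*-coloring: a proper coloring with a nice vertex of (top) color `k`. -/
def IsBStarColoring (G : SimpleGraph V) (k : ℕ) (c : V → ℕ) : Prop :=
  IsProperKColoring G k c ∧ ∃ u, c u = k ∧ IsNiceVertex G k c u

/-- The z-chromatic number: largest `k` admitting a z-coloring with `k` colors. -/
noncomputable def zNum (G : SimpleGraph V) : ℕ :=
  sSup {k | ∃ c : V → ℕ, IsZColoring G k c}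

/-- The b*-chromatic number: largest `k` admitting a b*-coloring with `k` colors. -/
noncomputable def bStar (G : SimpleGraph V) : ℕ :=
  sSup {k | ∃ c : V → ℕ, IsBStarColoring G k c}

/-- `m*(G)`: the largest `k` such that some vertex `u` has `k` distinct neighbors,
each of degree at least `k`. -/
noncomputable def mStar (G : SimpleGraph V) : ℕ :=
  sSup {k | ∃ (u : V) (s : Finset V), (↑s : Set V) ⊆ G.neighborSet u ∧ s.card = k ∧
    ∀ v ∈ s, k ≤ (G.neighborSet v).ncard}

/-- The clique number `ω(G)`. -/
noncomputable def omegaNum (G : SimpleGraph V) : ℕ :=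
  sSup {n | ∃ s : Finset V, G.IsNClique n s}
/-- The ball of radius `r` centered at `u`: vertices at graph distance at most `r`
from `u` (i.e. joined to `u` by a walk of length at most `r`). -/
def ball (G : SimpleGraph V) (u : V) (r : ℕ) : Set V :=
  {v | ∃ p : G.Walk u v, p.length ≤ r}

/-! Let `c` be a z-coloring of `G` with `k` colors and nice vertex `u`. As `u` sees the other
`k - 1` colors, `k ≤ deg u + 1 =: R`. Recolor `G[B(u, R)]` first-fit in the order given by `c`:
this is a Grundy coloring with colors `≤ c`, and every `v ∈ B(u, r)` with `r + c v ≤ R + 1` keeps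
its color, since the Grundy witnesses of `v` for the smaller colors stay inside the ball. This
covers `u`, its neighbors and the neighbors of those, so the recoloring is a z-coloring of
`G⁺(u)` with `k` colors. Under z-monotonicity the reverse inequality holds as `G⁺(u)` is an
induced subgraph of `G`. -/

/-- First-fit coloring of `H` in increasing order of `c`. Neighbors with equal `c` ignore each
other, so the result is proper only on edges where `c` is. -/
noncomputable def greedyColoring (H : SimpleGraph W) (c : W → ℕ) (v : W) : ℕ :=
  sInf {m | 1 ≤ m ∧ ∀ w, H.Adj v w → c w < c v → greedyColoring H c w ≠ m}
termination_by c v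

section Greedy

variable (H : SimpleGraph W) (c : W → ℕ)

lemma greedyColoring_le (hc : ∀ v, 1 ≤ c v) (v : W) : greedyColoring H c v ≤ c v := by
  induction hn : c v using Nat.strong_induction_on generalizing v with
  | _ n ih =>
    rw [greedyColoring, ← hn]
    exact Nat.sInf_le ⟨hc v, fun w _ hw => ((ih _ (hn ▸ hw) w rfl).trans_lt hw).ne⟩

lemma greedyColoring_mem (hc : ∀ v, 1 ≤ c v) (v : W) :
    greedyColoring H c v ∈
      {m | 1 ≤ m ∧ ∀ w, H.Adj v w → c w < c v → greedyColoring H c w ≠ m} := by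
  rw [greedyColoring]
  exact Nat.sInf_mem ⟨c v, hc v, fun w _ hw => ((greedyColoring_le H c hc w).trans_lt hw).ne⟩

lemma one_le_greedyColoring (hc : ∀ v, 1 ≤ c v) (v : W) : 1 ≤ greedyColoring H c v :=
  (greedyColoring_mem H c hc v).1

lemma greedyColoring_ne_of_lt (hc : ∀ v, 1 ≤ c v) {v w : W} (hvw : H.Adj v w)
    (hlt : c w < c v) : greedyColoring H c w ≠ greedyColoring H c v :=
  (greedyColoring_mem H c hc v).2 w hvw hlt

lemma greedyColoring_ne_of_adj (hc : ∀ v, 1 ≤ c v) {v w : W} (hvw : H.Adj v w)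
    (hne : c v ≠ c w) : greedyColoring H c v ≠ greedyColoring H c w := by
  rcases hne.lt_or_gt with hlt | hlt
  · exact greedyColoring_ne_of_lt H c hc hvw.symm hlt
  · exact (greedyColoring_ne_of_lt H c hc hvw hlt).symm

lemma exists_adj_greedyColoring_eq {v : W} {i : ℕ} (hi : 1 ≤ i)
    (hiv : i < greedyColoring H c v) : ∃ w, H.Adj v w ∧ c w < c v ∧ greedyColoring H c w = i := by
  rw [greedyColoring] at hiv
  have := Nat.notMem_of_lt_sInf hiv
  simp only [Set.mem_ofPred_eq, not_and, not_forall, not_not] at this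
  obtain ⟨w, hvw, hlt, hw⟩ := this hi
  exact ⟨w, hvw, hlt, hw⟩

theorem isGrundyColoring_greedyColoring {k : ℕ} (hc : ∀ v, c v ∈ Set.Icc 1 k)
    (hproper : ∀ v w, H.Adj v w → c v ≠ c w) (hk : ∃ v, greedyColoring H c v = k) :
    IsGrundyColoring H k (greedyColoring H c) := by
  have hc₁ : ∀ v, 1 ≤ c v := fun v => (hc v).1
  obtain ⟨v, hv⟩ := hk
  refine ⟨⟨fun w => ⟨one_le_greedyColoring H c hc₁ w, (greedyColoring_le H c hc₁ w).trans (hc w).2⟩,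
    fun w w' h => greedyColoring_ne_of_adj H c hc₁ h (hproper w w' h), fun j hj => ?_⟩,
    fun i j hi hij hjk w hw => ?_⟩
  · rcases hj.2.lt_or_eq with hjk | rfl
    · obtain ⟨w, -, -, hw⟩ := exists_adj_greedyColoring_eq H c hj.1 (hv ▸ hjk)
      exact ⟨w, hw⟩
    · exact ⟨v, hv⟩
  · obtain ⟨w', hww', -, hw'⟩ := exists_adj_greedyColoring_eq H c (v := w) hi (by omega)
    exact ⟨w', hww', hw'⟩

end Greedy

section Ball

variable {G : SimpleGraph V} {u v w : V} {r s : ℕ}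

lemma mem_ball_self : u ∈ ball G u r := ⟨.nil, Nat.zero_le _⟩

lemma ball_mono (h : r ≤ s) : ball G u r ⊆ ball G u s :=
  fun _ ⟨p, hp⟩ => ⟨p, hp.trans h⟩

lemma mem_ball_succ_of_adj (hv : v ∈ ball G u r) (hvw : G.Adj v w) : w ∈ ball G u (r + 1) := by
  obtain ⟨p, hp⟩ := hv
  exact ⟨p.concat hvw, by rw [SimpleGraph.Walk.length_concat]; omega⟩

end Ball

theorem greedyColoring_induce_ball_eq {G : SimpleGraph V} {k : ℕ} {c : V → ℕ}
    (hc : IsGrundyColoring G k c) {u : V} {R r : ℕ} (v : ball G u R) (hv : v.1 ∈ ball G u r)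
    (hr : r + c v ≤ R + 1) : greedyColoring (G.induce (ball G u R)) (c ∘ (↑)) v = c v := by
  obtain ⟨⟨hrange, -, -⟩, hgrundy⟩ := hc
  have hc₁ : ∀ v : ball G u R, 1 ≤ (c ∘ (↑)) v := fun v => (hrange v).1
  set g := greedyColoring (G.induce (ball G u R)) (c ∘ (↑))
  induction hn : c v using Nat.strong_induction_on generalizing v r with
  | _ n ih =>
    refine hn ▸ (greedyColoring_le _ _ hc₁ v).antisymm (not_lt.1 fun hlt => ?_)
    change g v < c v at hlt
    -- the Grundy neighbor `w` of `v` of color `g v` is one step farther out but has a smaller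
    -- color, so by induction it keeps it, which first-fit forbids
    obtain ⟨w, hvw, hcw⟩ :=
      hgrundy (g v) (c v) (one_le_greedyColoring _ _ hc₁ v) hlt (hrange v).2 v rfl
    have hw : w ∈ ball G u (r + 1) := mem_ball_succ_of_adj hv hvw
    have hwR : w ∈ ball G u R := ball_mono (by have := (hrange w).1; omega) hw
    have hkeep : g ⟨w, hwR⟩ = c w := ih _ (hn ▸ hcw ▸ hlt) ⟨w, hwR⟩ hw (show r + 1 + c w ≤ R + 1 by omega) rfl
    exact greedyColoring_ne_of_lt _ _ hc₁ (w := ⟨w, hwR⟩) hvw (show c w < c v by omega) (hkeep.trans hcw)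

theorem IsBVertex.sub_one_le_ncard_neighborSet {G : SimpleGraph V} {k : ℕ} {c : V → ℕ} {u : V}
    (hu : IsBVertex G k c u) (hcu : c u ∈ Set.Icc 1 k) (hfin : (G.neighborSet u).Finite) :
    k - 1 ≤ (G.neighborSet u).ncard :=
  calc k - 1 = (Set.Icc 1 k \ {c u}).ncard := by
        rw [Set.ncard_sdiff_singleton_of_mem hcu, Set.ncard_Icc_nat]; omega
    _ ≤ (c '' G.neighborSet u).ncard := by
        refine Set.ncard_le_ncard (fun j ⟨hj, hne⟩ => ?_) (hfin.image c)
        obtain ⟨w, huw, hw⟩ := hu j hj hne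
        exact ⟨w, huw, hw⟩
    _ ≤ (G.neighborSet u).ncard := Set.ncard_image_le hfin

theorem IsProperKColoring.le_card [Finite V] {G : SimpleGraph V} {k : ℕ} {c : V → ℕ}
    (hc : IsProperKColoring G k c) : k ≤ Nat.card V :=
  calc k = (Set.Icc 1 k).ncard := by rw [Set.ncard_Icc_nat]; omega
    _ ≤ (Set.range c).ncard := Set.ncard_le_ncard (fun j hj => hc.2.2 j hj) (Set.toFinite _)
    _ ≤ Nat.card V := Finite.card_range_le c

section ZNum

variable {G : SimpleGraph V} {G' : SimpleGraph W} {k : ℕ} {c : V → ℕ}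

theorem le_zNum [Finite V] (hc : IsZColoring G k c) : k ≤ zNum G :=
  le_csSup ⟨Nat.card V, fun _ ⟨_, hc'⟩ => hc'.1.1.le_card⟩ ⟨c, hc⟩

theorem zNum_le {n : ℕ} (h : ∀ k c, IsZColoring G k c → k ≤ n) : zNum G ≤ n :=
  csSup_le' fun k ⟨c, hc⟩ => h k c hc

lemma IsBVertex.comap (φ : G ≃g G') {c : W → ℕ} {u : W} (h : IsBVertex G' k c u) :
    IsBVertex G k (c ∘ φ) (φ.symm u) := by
  intro j hj hne
  obtain ⟨w, hw, hcw⟩ := h j hj (by simpa using hne)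
  exact ⟨φ.symm w, φ.symm.map_adj_iff.mpr hw, by simpa using hcw⟩

lemma IsZColoring.comap (φ : G ≃g G') {c : W → ℕ} (h : IsZColoring G' k c) :
    IsZColoring G k (c ∘ φ) := by
  obtain ⟨⟨⟨hrange, hproper, hsurj⟩, hgrundy⟩, u, hcu, hb, hnb⟩ := h
  refine ⟨⟨⟨fun v => hrange (φ v), fun a b hab => hproper (φ a) (φ b) (φ.map_adj_iff.mpr hab),
    fun j hj => ?_⟩, fun i j h1 hij hjk v hv => ?_⟩, φ.symm u, by simpa using hcu, hb.comap φ,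
    fun j hj hne => ?_⟩
  · obtain ⟨v, hv⟩ := hsurj j hj
    exact ⟨φ.symm v, by simpa using hv⟩
  · obtain ⟨w, hw, hcw⟩ := hgrundy i j h1 hij hjk (φ v) hv
    exact ⟨φ.symm w, by simpa using φ.symm.map_adj_iff.mpr hw, by simpa using hcw⟩
  · obtain ⟨w, hw, hcw, hbw⟩ := hnb j hj (by simpa using hne)
    exact ⟨φ.symm w, φ.symm.map_adj_iff.mpr hw, by simpa using hcw, hbw.comap φ⟩

theorem zNum_congr (φ : G ≃g G') : zNum G = zNum G' := by
  unfold zNum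
  congr 1
  ext k
  exact ⟨fun ⟨c, hc⟩ => ⟨c ∘ φ.symm, hc.comap φ.symm⟩, fun ⟨c, hc⟩ => ⟨c ∘ φ, hc.comap φ⟩⟩

end ZNum

theorem IsZColoring.exists_isZColoring_induce_ball [Finite V] {G : SimpleGraph V} {k : ℕ}
    {c : V → ℕ} (hc : IsZColoring G k c) :
    ∃ u, ∃ g : ball G u ((G.neighborSet u).ncard + 1) → ℕ,
      IsZColoring (G.induce (ball G u ((G.neighborSet u).ncard + 1))) k g := by
  obtain ⟨hgrundy, u, hcu, hub, hnice⟩ := hc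
  have hrange := hgrundy.1.1
  have hk : 1 ≤ k := hcu ▸ (hrange u).1
  have hdeg := hub.sub_one_le_ncard_neighborSet (hcu ▸ hrange u) (Set.toFinite _)
  set R := (G.neighborSet u).ncard + 1
  set g := greedyColoring (G.induce (ball G u R)) (c ∘ (↑))
  have hkeep : ∀ (v : ball G u R) r, v.1 ∈ ball G u r → r + c v ≤ R + 1 → g v = c v :=
    fun v _ => greedyColoring_induce_ball_eq hgrundy v
  have hu : g ⟨u, mem_ball_self⟩ = k :=
    hcu ▸ hkeep _ 0 mem_ball_self (show 0 + c u ≤ R + 1 by omega)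
  -- `c v ≤ k - 1 ≤ deg u`, so `r + c v ≤ R + 1`
  have hclose : ∀ v r, v ∈ ball G u r → r ≤ 2 → c v ≠ k →
      ∃ hv : v ∈ ball G u R, g ⟨v, hv⟩ = c v := fun v r hv hr hne =>
    have := hrange v
    ⟨ball_mono (by grind) hv, hkeep _ r hv (by grind)⟩
  refine ⟨u, g, isGrundyColoring_greedyColoring _ _ (fun v => hrange v)
    (fun v w h => hgrundy.1.2.1 _ _ h) ⟨_, hu⟩, ⟨u, mem_ball_self⟩, hu,
    fun j hj hne => ?_, fun j hj hne => ?_⟩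
  · obtain ⟨w, huw, rfl⟩ := hub j hj (hcu ▸ hu ▸ hne)
    obtain ⟨hw, hgw⟩ := hclose w 1 (mem_ball_succ_of_adj mem_ball_self huw) one_le_two (hu ▸ hne)
    exact ⟨⟨w, hw⟩, huw, hgw⟩
  · obtain ⟨w, huw, rfl, hwb⟩ := hnice j hj (hcu ▸ hu ▸ hne)
    obtain ⟨hw, hgw⟩ := hclose w 1 (mem_ball_succ_of_adj mem_ball_self huw) one_le_two (hu ▸ hne)
    refine ⟨⟨w, hw⟩, huw, hgw, fun i hi hine => ?_⟩
    rcases eq_or_ne i k with rfl | hik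
    · exact ⟨⟨u, mem_ball_self⟩, huw.symm, hu⟩
    · obtain ⟨x, hwx, rfl⟩ := hwb i hi (hgw ▸ hine)
      obtain ⟨hx, hgx⟩ := hclose x 2
        (mem_ball_succ_of_adj (mem_ball_succ_of_adj mem_ball_self huw) hwx) le_rfl hik
      exact ⟨⟨x, hx⟩, hwx, hgx⟩

theorem zNum_locality_general [Fintype V] (G : SimpleGraph V) :
    zNum G ≤ (Finset.univ.sup fun u : V =>
        zNum (G.induce (ball G u ((G.neighborSet u).ncard + 1)))) ∧
    ((∀ s₁ s₂ : Set V, s₂ ⊆ s₁ → s₂.Nonempty →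
        zNum (G.induce s₂) ≤ zNum (G.induce s₁)) →
      zNum G = Finset.univ.sup fun u : V =>
        zNum (G.induce (ball G u ((G.neighborSet u).ncard + 1)))) := by
  have hle : zNum G ≤ Finset.univ.sup fun u : V =>
      zNum (G.induce (ball G u ((G.neighborSet u).ncard + 1))) := zNum_le fun k c hc => by
    obtain ⟨u, g, hg⟩ := hc.exists_isZColoring_induce_ball
    exact (le_zNum hg).trans (Finset.le_sup (f := fun u : V =>
      zNum (G.induce (ball G u ((G.neighborSet u).ncard + 1)))) (Finset.mem_univ u))
  refine ⟨hle, fun hmono => hle.antisymm (Finset.sup_le fun u _ => ?_)⟩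
  calc zNum (G.induce (ball G u ((G.neighborSet u).ncard + 1)))
      ≤ zNum (G.induce Set.univ) := hmono _ _ (Set.subset_univ _) ⟨u, mem_ball_self⟩
    _ = zNum G := zNum_congr G.induceUnivIso

/-- for every finite simple graph `G` with at least one vertex,
`z(G) ≤ max_{u} z(G⁺(u))` where `G⁺(u) = G[B(u, deg u + 1)]`; moreover, if `G` is
z-monotonic then equality holds. -/
theorem zNum_locality [Fintype V] [Nonempty V] (G : SimpleGraph V) :
    zNum G ≤ (Finset.univ.sup fun u : V =>
        zNum (G.induce (ball G u ((G.neighborSet u).ncard + 1)))) ∧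
    ((∀ s₁ s₂ : Set V, s₂ ⊆ s₁ → s₂.Nonempty →
        zNum (G.induce s₂) ≤ zNum (G.induce s₁)) →
      zNum G = Finset.univ.sup fun u : V =>
        zNum (G.induce (ball G u ((G.neighborSet u).ncard + 1)))) :=
  zNum_locality_general G
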